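/- arXiv:math/0509462 — 4 statements merged into one kernel-verified Lean document; each statement's English description precedes it below -/
import Mathlib

section
/- Let G be a group such that G/[G,G] is infinite cyclic (isomorphic to ℤ) and such that the abelianization [G,G]/[[G,G],[G,G]] of the commutator subgroup is a torsion group. Then for every n ≥ 0 there is a group isomorphism G_r^{(n+1)}/[G_r^{(n+1)}, G_r^{(n+1)}] ≅ [G,G]/[[G,G],[G,G]]; that is, all higher-order Alexander modules of G are isomorphic to the zeroth one. -/
/-- One step of the rational derived series: for a subgroup `H` of `G`, the next term is
the set of elements of `H` whose image in the abelianization `H/[H,H]` is torsion,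
i.e. the preimage in `H` of the torsion subgroup of the abelianization of `H`,
regarded as a subgroup of `G`. -/
def rdsSucc {G : Type*} [Group G] (H : Subgroup G) : Subgroup G :=
  ((CommGroup.torsion (Abelianization H)).comap Abelianization.of).map H.subtype

/-- The rational derived series of a group `G`. -/
def rds (G : Type*) [Group G] : ℕ → Subgroup G
  | 0 => ⊤
  | n + 1 => rdsSucc (rds G n)

theorem rdsSucc_normal {G : Type*} [Group G] (H : Subgroup G) [H.Normal] :
    (rdsSucc H).Normal := by
  constructor
  intro x hx c
  rw [rdsSucc, Subgroup.mem_map] at hx ⊢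
  obtain ⟨y, hy, rfl⟩ := hx
  rw [Subgroup.mem_comap, CommGroup.mem_torsion, isOfFinOrder_iff_pow_eq_one] at hy
  obtain ⟨m, hm, hym⟩ := hy
  have hker : ∀ z : H, Abelianization.of z = 1 ↔ z ∈ commutator H := fun z =>
    QuotientGroup.eq_one_iff z
  have hym' : y ^ m ∈ commutator ↥H := by
    rw [← hker]
    rw [← map_pow] at hym
    exact hym
  have hcomm : Subgroup.map H.subtype (commutator ↥H) = ⁅H, H⁆ := by
    rw [commutator, Subgroup.map_commutator, ← MonoidHom.range_eq_map, Subgroup.range_subtype]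
  have hmemH : c * (H.subtype y) * c⁻¹ ∈ H := Subgroup.Normal.conj_mem ‹H.Normal› _ y.2 c
  refine ⟨⟨c * (H.subtype y) * c⁻¹, hmemH⟩, ?_, rfl⟩
  rw [Subgroup.mem_comap, CommGroup.mem_torsion, isOfFinOrder_iff_pow_eq_one]
  refine ⟨m, hm, ?_⟩
  rw [← map_pow, hker]
  have h1 : H.subtype ((⟨c * (H.subtype y) * c⁻¹, hmemH⟩ : H) ^ m)
      = c * (H.subtype (y ^ m)) * c⁻¹ := by
    rw [map_pow, map_pow]
    exact conj_pow
  have h2 : H.subtype ((⟨c * (H.subtype y) * c⁻¹, hmemH⟩ : H) ^ m)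
      ∈ Subgroup.map H.subtype (commutator ↥H) := by
    rw [hcomm, h1]
    exact Subgroup.Normal.conj_mem inferInstance _
      (by rw [← hcomm]; exact Subgroup.mem_map_of_mem _ hym') c
  rwa [Subgroup.mem_map_iff_mem (Subgroup.subtype_injective H)] at h2

instance rds_normal (G : Type*) [Group G] (n : ℕ) : (rds G n).Normal := by
  induction n with
  | zero => rw [show rds G 0 = ⊤ from rfl]; infer_instance
  | succ n ih => exact rdsSucc_normal (rds G n)

instance rds_subgroupOf_normal (G : Type*) [Group G] (n i : ℕ) :
    ((rds G n).subgroupOf (rds G i)).Normal :=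
  (rds_normal G n).subgroupOf _


lemma rdsSucc_eq_self_of_torsion {G : Type*} [Group G] (H : Subgroup G)
    (h : Monoid.IsTorsion (Abelianization ↥H)) : rdsSucc H = H := by
  have ht : (CommGroup.torsion (Abelianization ↥H)) = ⊤ := by
    ext x; simpa [CommGroup.mem_torsion] using h x
  rw [rdsSucc, ht, Subgroup.comap_top, ← MonoidHom.range_eq_map, Subgroup.range_subtype]

lemma multiplicative_int_torsion_free (x : Multiplicative ℤ) (h : IsOfFinOrder x) : x = 1 := by
  rw [isOfFinOrder_iff_pow_eq_one] at h
  obtain ⟨n, hn, hx⟩ := h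
  have : (n : ℤ) • (Multiplicative.toAdd x) = 0 := by
    have := congrArg Multiplicative.toAdd hx
    simpa using this
  rcases smul_eq_zero.mp this with h | h
  · exact absurd (by exact_mod_cast h) hn.ne'
  · exact Multiplicative.toAdd.injective (by simpa using h)

lemma map_subtype_commutator {G : Type*} [Group G] (H : Subgroup G) :
    Subgroup.map H.subtype (commutator ↥H) = ⁅H, H⁆ := by
  rw [commutator, Subgroup.map_commutator, ← MonoidHom.range_eq_map, Subgroup.range_subtype]

lemma rds_one_eq_commutator {G : Type*} [Group G]
    (h1 : Nonempty (Abelianization G ≃* Multiplicative ℤ)) :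
    rds G 1 = commutator G := by
  obtain ⟨e0⟩ := h1
  let e : Abelianization ↥(⊤ : Subgroup G) ≃* Multiplicative ℤ :=
    (Subgroup.topEquiv.abelianizationCongr).trans e0
  have key : ∀ y : ↥(⊤ : Subgroup G),
      IsOfFinOrder (Abelianization.of y) ↔ y ∈ commutator ↥(⊤ : Subgroup G) := by
    intro y
    constructor
    · intro hy
      have : IsOfFinOrder (e (Abelianization.of y)) := e.toMonoidHom.isOfFinOrder hy
      have h1' : e (Abelianization.of y) = 1 := multiplicative_int_torsion_free _ this
      have : Abelianization.of y = 1 := by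
        rwa [map_eq_one_iff _ e.injective] at h1'
      exact (QuotientGroup.eq_one_iff y).mp this
    · intro hy
      have : Abelianization.of y = 1 := (QuotientGroup.eq_one_iff y).mpr hy
      rw [this]; exact IsOfFinOrder.one
  show rdsSucc ⊤ = commutator G
  rw [rdsSucc]
  have : ((CommGroup.torsion (Abelianization ↥(⊤ : Subgroup G))).comap Abelianization.of)
      = commutator ↥(⊤ : Subgroup G) := by
    ext y
    rw [Subgroup.mem_comap, CommGroup.mem_torsion]
    exact key y
  rw [this, map_subtype_commutator]
  rfl

lemma rds_succ_eq_commutator {G : Type*} [Group G]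
    (h1 : Nonempty (Abelianization G ≃* Multiplicative ℤ))
    (h2 : Monoid.IsTorsion (Abelianization ↥(commutator G))) (n : ℕ) :
    rds G (n + 1) = commutator G := by
  induction n with
  | zero => exact rds_one_eq_commutator h1
  | succ n ih =>
    show rdsSucc (rds G (n + 1)) = commutator G
    rw [ih]
    exact rdsSucc_eq_self_of_torsion _ h2

/-- If `G/[G,G] ≅ ℤ` and `[G,G]/[[G,G],[G,G]]` is a torsion group, then for
every `n ≥ 0` there is a group isomorphism
`G_r^{(n+1)}/[G_r^{(n+1)},G_r^{(n+1)}] ≅ [G,G]/[[G,G],[G,G]]`. -/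
theorem higher_alexander_modules_iso_zeroth (G : Type*) [Group G]
    (h1 : Nonempty (Abelianization G ≃* Multiplicative ℤ))
    (h2 : Monoid.IsTorsion (Abelianization ↥(commutator G))) :
    ∀ n : ℕ,
      Nonempty (Abelianization ↥(rds G (n + 1)) ≃* Abelianization ↥(commutator G)) := by
  intro n
  exact ⟨MulEquiv.abelianizationCongr (MulEquiv.subgroupCongr (rds_succ_eq_commutator h1 h2 n))⟩
end

section
/- Let G be any group and n a natural number, and set Γ_n = G/G_r^{(n+1)}. For 0 ≤ i ≤ n+1, let H_i denote the image of G_r^{(n+1-i)} under the quotient map G → Γ_n. Then H_0 is the trivial subgroup, H_{n+1} = Γ_n, each H_i is a normal subgroup of Γ_n with H_i ≤ H_{i+1}, and each successive quotient H_{i+1}/H_i is torsion-free abelian. In particular Γ_n is a poly-torsion-free-abelian group. -/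
open scoped commutatorElement

/-- A group `Γ` is poly-torsion-free-abelian (PTFA) if it admits a normal series whose
successive quotients are torsion-free abelian (expressed here at the level of elements). -/
def IsPTFA (Γ : Type*) [Group Γ] : Prop :=
  ∃ (m : ℕ) (H : ℕ → Subgroup Γ), H 0 = ⊥ ∧ H m = ⊤ ∧
    ∀ i < m, (H i).Normal ∧ H i ≤ H (i + 1) ∧
      (∀ x y : Γ, x ∈ H (i + 1) → y ∈ H (i + 1) → ⁅x, y⁆ ∈ H i) ∧
      (∀ x : Γ, x ∈ H (i + 1) → ∀ k : ℕ, k ≠ 0 → x ^ k ∈ H i → x ∈ H i)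

/-- The subnormal series of `Γ_n = G/G_r^{(n+1)}` given by the images `H_i` of the terms
`G_r^{(n+1-i)}` of the rational derived series under the quotient map `G → Γ_n`. -/
def ptfaChain (G : Type*) [Group G] (n i : ℕ) : Subgroup (G ⧸ rds G (n + 1)) :=
  (rds G (n + 1 - i)).map (QuotientGroup.mk' (rds G (n + 1)))

lemma rdsSucc_le {G : Type*} [Group G] (H : Subgroup G) : rdsSucc H ≤ H := by
  rw [rdsSucc]
  intro x hx
  obtain ⟨y, -, rfl⟩ := Subgroup.mem_map.mp hx
  exact y.2

lemma commutator_mem_rdsSucc {G : Type*} [Group G] (H : Subgroup G) {x y : G}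
    (hx : x ∈ H) (hy : y ∈ H) : ⁅x, y⁆ ∈ rdsSucc H := by
  rw [rdsSucc, Subgroup.mem_map]
  refine ⟨⁅(⟨x, hx⟩ : H), (⟨y, hy⟩ : H)⁆, ?_, rfl⟩
  rw [Subgroup.mem_comap, map_commutatorElement]
  have : ⁅Abelianization.of (⟨x, hx⟩ : H), Abelianization.of (⟨y, hy⟩ : H)⁆ = 1 :=
    commutatorElement_eq_one_iff_commute.mpr (mul_comm _ _)
  rw [this]
  exact (CommGroup.torsion _).one_mem

lemma pow_mem_rdsSucc {G : Type*} [Group G] (H : Subgroup G) {a : G} (ha : a ∈ H)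
    {k : ℕ} (hk : k ≠ 0) (hak : a ^ k ∈ rdsSucc H) : a ∈ rdsSucc H := by
  rw [rdsSucc, Subgroup.mem_map] at hak ⊢
  obtain ⟨y, hy, hy2⟩ := hak
  have hyy : y = (⟨a, ha⟩ : H) ^ k := Subgroup.subtype_injective H (by
    simpa using hy2)
  rw [Subgroup.mem_comap, CommGroup.mem_torsion, isOfFinOrder_iff_pow_eq_one] at hy
  obtain ⟨m, hm, hym⟩ := hy
  refine ⟨⟨a, ha⟩, ?_, rfl⟩
  rw [Subgroup.mem_comap, CommGroup.mem_torsion, isOfFinOrder_iff_pow_eq_one]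
  refine ⟨k * m, Nat.mul_pos (Nat.pos_of_ne_zero hk) hm, ?_⟩
  rw [pow_mul, ← map_pow, ← hyy]
  exact hym

lemma rds_antitone_succ (G : Type*) [Group G] (n : ℕ) : rds G (n + 1) ≤ rds G n :=
  rdsSucc_le _

lemma rds_antitone (G : Type*) [Group G] : Antitone (rds G) :=
  antitone_nat_of_succ_le (rds_antitone_succ G)

/-- For any group `G` and any `n`, with `Γ_n = G/G_r^{(n+1)}` and
`H_i` the image of `G_r^{(n+1-i)}` in `Γ_n` (for `0 ≤ i ≤ n+1`): `H_0` is trivial,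
`H_{n+1} = Γ_n`, each `H_i` is normal in `Γ_n` with `H_i ≤ H_{i+1}`, and each successive
quotient `H_{i+1}/H_i` is torsion-free abelian. In particular `Γ_n` is PTFA. -/
theorem gamma_n_is_PTFA (G : Type*) [Group G] (n : ℕ) :
    ptfaChain G n 0 = ⊥ ∧
    ptfaChain G n (n + 1) = ⊤ ∧
    (∀ i ≤ n + 1, (ptfaChain G n i).Normal) ∧
    (∀ i ≤ n, ptfaChain G n i ≤ ptfaChain G n (i + 1) ∧
      (∀ x y : G ⧸ rds G (n + 1), x ∈ ptfaChain G n (i + 1) → y ∈ ptfaChain G n (i + 1) →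
        ⁅x, y⁆ ∈ ptfaChain G n i) ∧
      (∀ x : G ⧸ rds G (n + 1), x ∈ ptfaChain G n (i + 1) →
        ∀ k : ℕ, k ≠ 0 → x ^ k ∈ ptfaChain G n i → x ∈ ptfaChain G n i)) ∧
    IsPTFA (G ⧸ rds G (n + 1)) := by
  have h0 : ptfaChain G n 0 = ⊥ := by
    rw [ptfaChain]
    simp only [Nat.sub_zero]
    rw [eq_bot_iff]
    intro x hx
    obtain ⟨a, ha, rfl⟩ := Subgroup.mem_map.mp hx
    simpa [Subgroup.mem_bot, QuotientGroup.eq_one_iff] using ha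
  have htop : ptfaChain G n (n + 1) = ⊤ := by
    rw [ptfaChain, Nat.sub_self]
    rw [show rds G 0 = ⊤ from rfl]
    rw [Subgroup.map_top_of_surjective _ (QuotientGroup.mk'_surjective _)]
  have hnorm : ∀ i ≤ n + 1, (ptfaChain G n i).Normal := fun i _ =>
    Subgroup.Normal.map (rds_normal G (n + 1 - i)) _ (QuotientGroup.mk'_surjective _)
  have hmono : ∀ i ≤ n, ptfaChain G n i ≤ ptfaChain G n (i + 1) := by
    intro i hi
    apply Subgroup.map_mono
    apply rds_antitone
    omega
  have hidx : ∀ i ≤ n, n + 1 - i = (n + 1 - (i + 1)) + 1 := by omega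
  have hcomm : ∀ i ≤ n, ∀ x y : G ⧸ rds G (n + 1), x ∈ ptfaChain G n (i + 1) →
      y ∈ ptfaChain G n (i + 1) → ⁅x, y⁆ ∈ ptfaChain G n i := by
    intro i hi x y hx hy
    obtain ⟨a, ha, rfl⟩ := Subgroup.mem_map.mp hx
    obtain ⟨b, hb, rfl⟩ := Subgroup.mem_map.mp hy
    rw [ptfaChain, hidx i hi]
    rw [show rds G ((n + 1 - (i + 1)) + 1) = rdsSucc (rds G (n + 1 - (i + 1))) from rfl]
    rw [← map_commutatorElement]
    exact Subgroup.mem_map_of_mem _ (commutator_mem_rdsSucc _ ha hb)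
  have hroot : ∀ i ≤ n, ∀ x : G ⧸ rds G (n + 1), x ∈ ptfaChain G n (i + 1) →
      ∀ k : ℕ, k ≠ 0 → x ^ k ∈ ptfaChain G n i → x ∈ ptfaChain G n i := by
    intro i hi x hx k hk hxk
    obtain ⟨a, ha, rfl⟩ := Subgroup.mem_map.mp hx
    rw [← map_pow] at hxk
    obtain ⟨b, hb, hb2⟩ := Subgroup.mem_map.mp hxk
    -- b and a^k have equal images, so a^k * b⁻¹ ∈ rds G (n+1)
    have hdiff : a ^ k * b⁻¹ ∈ rds G (n + 1) := by
      have := QuotientGroup.eq_iff_div_mem.mp hb2.symm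
      simpa [div_eq_mul_inv] using this
    have hdiff' : a ^ k * b⁻¹ ∈ rds G (n + 1 - i) := rds_antitone G (by omega) hdiff
    have hidx' : n + 1 - i = (n + 1 - (i + 1)) + 1 := hidx i hi
    have hak : a ^ k ∈ rds G (n + 1 - i) := by
      have heq : a ^ k = (a ^ k * b⁻¹) * b := by group
      rw [heq]
      exact Subgroup.mul_mem _ hdiff' hb
    have hroot' : a ∈ rds G (n + 1 - i) := by
      rw [hidx'] at hak ⊢
      exact pow_mem_rdsSucc _ ha hk hak
    exact Subgroup.mem_map_of_mem _ hroot'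
  refine ⟨h0, htop, hnorm, fun i hi => ⟨hmono i hi, hcomm i hi, hroot i hi⟩, ?_⟩
  exact ⟨n + 1, ptfaChain G n, h0, htop, fun i hilt =>
    ⟨hnorm i (by omega), hmono i (by omega), hcomm i (by omega), hroot i (by omega)⟩⟩
end

section
/- Let G be the group with presentation ⟨a, b | aba = bab, a² = b²⟩ (the fundamental group of the affine complement of Zariski's three-cuspidal quartic with a generic line at infinity). Then the commutator subgroup [G,G] is isomorphic to the cyclic group ℤ/3ℤ. -/
/-!
Put `x = a b⁻¹`. From `a² = b²` one gets `x = a⁻¹ b`, so conjugation by `a` inverts `x`;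
hence `⟨x⟩` is normal, and `G / ⟨x⟩` is cyclic because `a` and `b = x⁻¹ a` have the same
image there. Thus `[G, G] ≤ ⟨x⟩`. The braid relation gives `x³ = a² b⁻² = 1`, so
`⁅a, x⁆ = x⁻² = x` and `[G, G] = ⟨x⟩`. Finally `x ≠ 1`, since `a ↦ (0 1)`, `b ↦ (1 2)`
defines a map onto `S₃`; so `[G, G]` has prime order `3`.
-/

/-- The relators `(aba)(bab)⁻¹` and `a²b⁻²` of the presentation
`⟨a, b | aba = bab, a² = b²⟩` of the fundamental group of the affine complement of
Zariski's three-cuspidal quartic (with a generic line at infinity). -/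
def zariskiRels : Set (FreeGroup (Fin 2)) :=
  {FreeGroup.of 0 * FreeGroup.of 1 * FreeGroup.of 0 *
      (FreeGroup.of 1 * FreeGroup.of 0 * FreeGroup.of 1)⁻¹,
   FreeGroup.of 0 ^ 2 * (FreeGroup.of 1 ^ 2)⁻¹}

section GeneralGroup

open scoped commutatorElement

variable {G : Type*} [Group G] {a b : G}

theorem mul_inv_eq_inv_mul_of_sq_eq (hsq : a ^ 2 = b ^ 2) : a * b⁻¹ = a⁻¹ * b :=
  calc a * b⁻¹ = a⁻¹ * (a ^ 2 * (b ^ 2)⁻¹) * b := by group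
    _ = a⁻¹ * b := by rw [hsq]; group

theorem conj_mul_inv_of_sq_eq (hsq : a ^ 2 = b ^ 2) : a * (a * b⁻¹) * a⁻¹ = (a * b⁻¹)⁻¹ := by
  nth_rewrite 1 [mul_inv_eq_inv_mul_of_sq_eq hsq]
  group

theorem mul_inv_pow_three_eq_one (hbraid : a * b * a = b * a * b) (hsq : a ^ 2 = b ^ 2) :
    (a * b⁻¹) ^ 3 = 1 :=
  calc (a * b⁻¹) ^ 3 = a * b⁻¹ * (a⁻¹ * b) * (a * b⁻¹) := by
        rw [← mul_inv_eq_inv_mul_of_sq_eq hsq, pow_three']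
    _ = a * b⁻¹ * a⁻¹ * (b * a * b) * b⁻¹ * b⁻¹ := by group
    _ = a ^ 2 * (b ^ 2)⁻¹ := by rw [← hbraid, sq, sq]; group
    _ = 1 := by rw [hsq, mul_inv_cancel]

theorem mul_inv_mem_commutator (hbraid : a * b * a = b * a * b) (hsq : a ^ 2 = b ^ 2) :
    a * b⁻¹ ∈ commutator G := by
  have h : ⁅a, a * b⁻¹⁆ = a * b⁻¹ := by
    rw [commutatorElement_def, conj_mul_inv_of_sq_eq hsq, ← mul_inv_rev]
    refine inv_eq_of_mul_eq_one_right ?_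
    rw [← pow_three']
    exact mul_inv_pow_three_eq_one hbraid hsq
  rw [← h]
  exact Subgroup.commutator_mem_commutator (Subgroup.mem_top a) (Subgroup.mem_top _)

theorem zpowers_mul_inv_normal (hgen : Subgroup.closure {a, b} = ⊤) (hsq : a ^ 2 = b ^ 2) :
    (Subgroup.zpowers (a * b⁻¹)).Normal := by
  set x := a * b⁻¹ with hx
  have ha : a ∈ Subgroup.normalizer (Subgroup.zpowers x : Set G) := by
    have hconj : (MulAut.conj a : G →* G) x = x⁻¹ := conj_mul_inv_of_sq_eq hsq
    rw [Subgroup.mem_normalizer_iff_map_conj_eq, MonoidHom.map_zpowers, hconj,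
      Subgroup.zpowers_inv]
  have hb : b ∈ Subgroup.normalizer (Subgroup.zpowers x : Set G) := by
    have hb_eq : b = x⁻¹ * a := by rw [hx]; group
    rw [hb_eq]
    exact mul_mem (Subgroup.le_normalizer (inv_mem (Subgroup.mem_zpowers x))) ha
  rw [← Subgroup.normalizer_eq_top_iff, eq_top_iff, ← hgen, Subgroup.closure_le]
  exact Set.insert_subset ha (Set.singleton_subset_iff.mpr hb)

theorem commutator_le_zpowers_mul_inv (hgen : Subgroup.closure {a, b} = ⊤)
    (hsq : a ^ 2 = b ^ 2) : commutator G ≤ Subgroup.zpowers (a * b⁻¹) := by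
  have hnormal := zpowers_mul_inv_normal hgen hsq
  rw [← Subgroup.Normal.quotient_commutative_iff_commutator_le]
  let π := QuotientGroup.mk' (Subgroup.zpowers (a * b⁻¹))
  have hab : π b = π a := by
    rw [eq_comm, ← mul_inv_eq_one, ← map_inv, ← map_mul, QuotientGroup.mk'_apply,
      QuotientGroup.eq_one_iff]
    exact Subgroup.mem_zpowers _
  have htop : Subgroup.zpowers (π a) = ⊤ := by
    rw [eq_top_iff, ← Subgroup.map_top_of_surjective π (QuotientGroup.mk'_surjective _), ← hgen,
      MonoidHom.map_closure, Set.image_pair, hab, Set.pair_eq_singleton]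
    exact (Subgroup.zpowers_eq_closure _).ge
  have : IsCyclic (G ⧸ Subgroup.zpowers (a * b⁻¹)) :=
    isCyclic_iff_exists_zpowers_eq_top.mpr ⟨_, htop⟩
  infer_instance

theorem commutator_eq_zpowers_mul_inv (hgen : Subgroup.closure {a, b} = ⊤)
    (hbraid : a * b * a = b * a * b) (hsq : a ^ 2 = b ^ 2) :
    commutator G = Subgroup.zpowers (a * b⁻¹) :=
  le_antisymm (commutator_le_zpowers_mul_inv hgen hsq)
    (Subgroup.zpowers_le.mpr (mul_inv_mem_commutator hbraid hsq))

end GeneralGroup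

section Zariski

open PresentedGroup Equiv

theorem zariski_of_braid :
    (of 0 : PresentedGroup zariskiRels) * of 1 * of 0 = of 1 * of 0 * of 1 :=
  mk_eq_mk_of_mul_inv_mem (Set.mem_insert _ _)

theorem zariski_of_sq : (of 0 : PresentedGroup zariskiRels) ^ 2 = of 1 ^ 2 :=
  mk_eq_mk_of_mul_inv_mem (Set.mem_insert_of_mem _ rfl)

theorem closure_zariski_of : Subgroup.closure {(of 0 : PresentedGroup zariskiRels), of 1} = ⊤ := by
  rw [← closure_range_of]
  congr
  ext g
  simp [Fin.exists_fin_two, eq_comm]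

def zariskiToPerm : PresentedGroup zariskiRels →* Perm (Fin 3) :=
  toGroup (f := ![swap 0 1, swap 1 2]) (by rintro r (rfl | rfl) <;> decide)

theorem zariski_of_zero_ne_of_one : (of 0 : PresentedGroup zariskiRels) ≠ of 1 := fun h => by
  have himage := congrArg zariskiToPerm h
  simp only [zariskiToPerm, toGroup.of] at himage
  exact absurd himage (by decide)

theorem orderOf_zariski_of_mul_inv_of :
    orderOf ((of 0 : PresentedGroup zariskiRels) * (of 1)⁻¹) = 3 :=
  orderOf_eq_prime (mul_inv_pow_three_eq_one zariski_of_braid zariski_of_sq)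
    (mul_inv_eq_one.not.mpr zariski_of_zero_ne_of_one)

end Zariski

/-- For `G = ⟨a, b | aba = bab, a² = b²⟩`, the commutator subgroup `[G,G]`
is isomorphic to the cyclic group `ℤ/3ℤ`. -/
theorem zariski_commutator_iso_zmod3 :
    Nonempty (↥(commutator (PresentedGroup zariskiRels)) ≃* Multiplicative (ZMod 3)) := by
  have hcard : Nat.card (commutator (PresentedGroup zariskiRels)) = 3 := by
    rw [commutator_eq_zpowers_mul_inv closure_zariski_of zariski_of_braid zariski_of_sq,
      Nat.card_zpowers, orderOf_zariski_of_mul_inv_of]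
  exact ⟨mulEquivOfPrimeCardEq hcard (by simp)⟩
end

section
/- Let G be the group with presentation ⟨a, b | aba = bab, a² = b²⟩. Then the abelianization G/[G,G] is infinite cyclic, and for every n ≥ 0 one has G_r^{(n+1)} = [G,G] and the abelianization G_r^{(n+1)}/[G_r^{(n+1)}, G_r^{(n+1)}] is isomorphic to ℤ/3ℤ; that is, all higher-order Alexander modules of G are isomorphic to ℤ/3ℤ. -/
section

variable {G : Type*} [Group G]

theorem rdsSucc_eq_commutator_of_isMulTorsionFree (H : Subgroup G)
    [IsMulTorsionFree (Abelianization H)] : rdsSucc H = ⁅H, H⁆ := by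
  rw [rdsSucc, CommGroup.isMulTorsionFree_iff_torsion_eq_bot.1 ‹_›, MonoidHom.comap_bot,
    Abelianization.ker_of, commutator_def, Subgroup.map_commutator, ← MonoidHom.range_eq_map,
    Subgroup.range_subtype]

theorem rdsSucc_eq_self_of_isMulTorsion (H : Subgroup G) (hH : IsMulTorsion H) :
    rdsSucc H = H := by
  rw [rdsSucc, CommGroup.torsion_eq_top_iff.2 (hH.of_surjective (QuotientGroup.mk'_surjective _)),
    Subgroup.comap_top, ← MonoidHom.range_eq_map, Subgroup.range_subtype]

theorem rds_one_of_isMulTorsionFree [IsMulTorsionFree (Abelianization G)] :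
    rds G 1 = commutator G := by
  have : IsMulTorsionFree (Abelianization (⊤ : Subgroup G)) :=
    (Subgroup.topEquiv.abelianizationCongr : _ ≃* Abelianization G).injective.isMulTorsionFree
  exact (rdsSucc_eq_commutator_of_isMulTorsionFree ⊤).trans (commutator_def G).symm

theorem rds_succ_eq_of_rdsSucc_eq_self {K : Subgroup G} (h₁ : rds G 1 = K)
    (hK : rdsSucc K = K) (n : ℕ) : rds G (n + 1) = K := by
  induction n with
  | zero => exact h₁
  | succ n ih => exact (congrArg rdsSucc ih).trans hK

theorem Subgroup.mem_normalizer_zpowers_of_conj_eq_inv {g u : G} (h : g * u * g⁻¹ = u⁻¹) :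
    g ∈ Subgroup.normalizer (Subgroup.zpowers u : Set G) := by
  rw [Subgroup.mem_normalizer_iff_map_conj_eq, MonoidHom.map_zpowers, MonoidHom.coe_coe,
    MulAut.conj_apply, h, Subgroup.zpowers_inv]

theorem commutator_le_of_forall_inv_mul_mem {S : Set G} (hS : Subgroup.closure S = ⊤)
    {N : Subgroup G} [N.Normal] {g : G} (h : ∀ s ∈ S, g⁻¹ * s ∈ N) : commutator G ≤ N := by
  have hcyclic : IsCyclic (G ⧸ N) := by
    refine isCyclic_iff_exists_zpowers_eq_top.2 ⟨g, eq_top_iff.2 ?_⟩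
    rw [← Subgroup.map_top_of_surjective _ (QuotientGroup.mk'_surjective N), ← hS,
      MonoidHom.map_closure, Subgroup.closure_le]
    rintro _ ⟨s, hs, rfl⟩
    exact QuotientGroup.eq.2 (h s hs) ▸ Subgroup.mem_zpowers _
  exact Subgroup.Normal.quotient_commutative_iff_commutator_le.1 inferInstance

open scoped IsMulCommutative in
noncomputable def abelianizationZPowersEquivZMod (u : G) :
    Abelianization (Subgroup.zpowers u) ≃* Multiplicative (ZMod (orderOf u)) :=
  Abelianization.equivOfComm.symm.trans
    (mulEquivOfCyclicCardEq <| by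
      rw [Nat.card_zpowers, Nat.card_congr Multiplicative.toAdd, Nat.card_zmod])

end

namespace Zariski

local notation "Γ" => PresentedGroup zariskiRels
local notation "a" => (PresentedGroup.of 0 : Γ)
local notation "b" => (PresentedGroup.of 1 : Γ)

def u : Γ := a * b⁻¹

theorem aba_eq_bab : a * b * a = b * a * b :=
  PresentedGroup.mk_eq_mk_of_mul_inv_mem (Set.mem_insert _ _)

theorem a_mul_a_eq_b_mul_b : a * a = b * b :=
  PresentedGroup.mk_eq_mk_of_mul_inv_mem (x := FreeGroup.of 0 * FreeGroup.of 0)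
    (y := FreeGroup.of 1 * FreeGroup.of 1) (Set.mem_insert_of_mem _ (by rw [sq, sq]; rfl))

theorem inv_a_mul_b : a⁻¹ * b = u :=
  calc a⁻¹ * b = a⁻¹ * (b * b) * b⁻¹ := by group
    _ = a⁻¹ * (a * a) * b⁻¹ := by rw [a_mul_a_eq_b_mul_b]
    _ = u := by rw [u]; group

theorem conj_a_u : a * u * a⁻¹ = u⁻¹ :=
  calc a * u * a⁻¹ = (a * a) * b⁻¹ * a⁻¹ := by rw [u]; group
    _ = (b * b) * b⁻¹ * a⁻¹ := by rw [a_mul_a_eq_b_mul_b]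
    _ = u⁻¹ := by rw [u]; group

theorem conj_b_u : b * u * b⁻¹ = u⁻¹ :=
  calc b * u * b⁻¹ = b * a * (b * b)⁻¹ := by rw [u]; group
    _ = b * a * (a * a)⁻¹ := by rw [← a_mul_a_eq_b_mul_b]
    _ = u⁻¹ := by rw [u]; group

theorem inv_b_mul_a_mul_b : b⁻¹ * a * b = a * b * a⁻¹ :=
  calc b⁻¹ * a * b = b⁻¹ * (a * b * a) * a⁻¹ := by group
    _ = a * b * a⁻¹ := by rw [aba_eq_bab]; group

theorem u_pow_three : u ^ 3 = 1 :=
  calc u ^ 3 = a * (b⁻¹ * a * b) * (b * b)⁻¹ * a * b⁻¹ := by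
        rw [u, pow_succ, pow_succ, pow_one]; group
    _ = (a * a) * b * (a * a)⁻¹ * b⁻¹ := by
        rw [inv_b_mul_a_mul_b, ← a_mul_a_eq_b_mul_b]; group
    _ = 1 := by rw [a_mul_a_eq_b_mul_b]; group

def toPerm : Γ →* Equiv.Perm (Fin 3) :=
  PresentedGroup.toGroup (f := ![Equiv.swap 0 1, Equiv.swap 1 2]) (by
    rintro r (rfl | rfl) <;>
      simp only [map_mul, map_inv, map_pow, FreeGroup.lift_apply_of, Matrix.cons_val_zero,
        Matrix.cons_val_one] <;> decide)

theorem u_ne_one : u ≠ 1 := by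
  intro h
  have h' := congrArg toPerm h
  rw [u, map_mul, map_inv, toPerm, PresentedGroup.toGroup.of, PresentedGroup.toGroup.of,
    map_one] at h'
  revert h'
  decide

theorem orderOf_u : orderOf u = 3 :=
  orderOf_eq_prime u_pow_three u_ne_one

instance zpowers_u_normal : (Subgroup.zpowers u).Normal :=
  Subgroup.normalizer_eq_top_iff.1 <| eq_top_iff.2 fun x _ =>
    PresentedGroup.generated_by _ _ (Fin.forall_fin_two.2
      ⟨Subgroup.mem_normalizer_zpowers_of_conj_eq_inv conj_a_u,
        Subgroup.mem_normalizer_zpowers_of_conj_eq_inv conj_b_u⟩) x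

theorem of_a_eq_of_b : (Abelianization.of a : Abelianization Γ) = Abelianization.of b := by
  have h := congrArg Abelianization.of aba_eq_bab
  simp only [map_mul] at h
  exact mul_left_cancel (h.trans (by rw [mul_comm (Abelianization.of b)]))

theorem commutator_eq_zpowers_u : commutator Γ = Subgroup.zpowers u := by
  refine le_antisymm (commutator_le_of_forall_inv_mul_mem (PresentedGroup.closure_range_of _)
    (g := a) ?_) (Subgroup.zpowers_le.2 ?_)
  · rintro _ ⟨j, rfl⟩
    fin_cases j
    · simp
    · exact inv_a_mul_b ▸ Subgroup.mem_zpowers u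
  · rw [← Abelianization.ker_of, MonoidHom.mem_ker, u, map_mul, map_inv, of_a_eq_of_b,
      mul_inv_cancel]

def degree : Γ →* Multiplicative ℤ :=
  PresentedGroup.toGroup (f := fun _ => Multiplicative.ofAdd 1) (by
    rintro r (rfl | rfl) <;> simp only [map_mul, map_inv, map_pow, FreeGroup.lift_apply_of] <;>
      group)

theorem degree_of (j : Fin 2) : degree (PresentedGroup.of j) = Multiplicative.ofAdd 1 :=
  PresentedGroup.toGroup.of _

def abelianizationEquiv : Abelianization Γ ≃* Multiplicative ℤ :=
  MonoidHom.toMulEquiv (Abelianization.lift degree) (zpowersHom _ (Abelianization.of a))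
    (Abelianization.hom_ext _ _ <| PresentedGroup.ext fun j => by
      fin_cases j
      · simp [degree_of]
      · simpa [degree_of] using of_a_eq_of_b)
    (MonoidHom.ext_mint (by simp [degree_of]))

instance : IsMulTorsionFree (Abelianization Γ) :=
  abelianizationEquiv.injective.isMulTorsionFree

theorem isMulTorsion_zpowers_u : IsMulTorsion (Subgroup.zpowers u) :=
  have : Finite (Subgroup.zpowers u) :=
    (isOfFinOrder_iff_pow_eq_one.2 ⟨3, three_pos, u_pow_three⟩).finite_zpowers.to_subtype
  isMulTorsion_of_finite

end Zariski

open Zariski in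
/-- For `G = ⟨a, b | aba = bab, a² = b²⟩`, the abelianization `G/[G,G]` is
infinite cyclic, and for every `n ≥ 0` one has `G_r^{(n+1)} = [G,G]` and the abelianization
`G_r^{(n+1)}/[G_r^{(n+1)},G_r^{(n+1)}]` is isomorphic to `ℤ/3ℤ`. -/
theorem zariski_higher_alexander_modules :
    Nonempty (Abelianization (PresentedGroup zariskiRels) ≃* Multiplicative ℤ) ∧
    ∀ n : ℕ,
      rds (PresentedGroup zariskiRels) (n + 1) = commutator (PresentedGroup zariskiRels) ∧
      Nonempty (Abelianization ↥(rds (PresentedGroup zariskiRels) (n + 1)) ≃*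
        Multiplicative (ZMod 3)) := by
  have hrds := rds_succ_eq_of_rdsSucc_eq_self rds_one_of_isMulTorsionFree <| by
    rw [commutator_eq_zpowers_u]
    exact rdsSucc_eq_self_of_isMulTorsion _ isMulTorsion_zpowers_u
  refine ⟨⟨abelianizationEquiv⟩, fun n => ⟨hrds n, ?_⟩⟩
  rw [hrds n, commutator_eq_zpowers_u]
  exact ⟨(abelianizationZPowersEquivZMod u).trans
    (ZMod.ringEquivCongr orderOf_u).toAddEquiv.toMultiplicative⟩
end
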